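/- arXiv:2605.11279 — 6 statements merged into one kernel-verified Lean document; each statement's English description precedes it below -/
import Mathlib

section
/- Let v₊ > 0, α⁺, α⁻ > 0, ρ⁺ ∈ (0,1) satisfy (ρ⁺)² + (α⁺+α⁻−1)ρ⁺ − α⁻ = 0, ρ⁻ = 1 − ρ⁺, γ = v₊ρ⁺. Then the 2×2 matrix J = [[−(v₊−γ+α⁺−ρ⁻)/γ, ρ⁻(ρ⁺+α⁻+γ)/(γρ⁺)], [ρ⁺(α⁺−ρ⁻)/(γρ⁻), −(ρ⁺+α⁻)/γ]] has determinant v₊ρ⁺ρ⁻/γ² > 0 and trace −(v₊−γ+α⁺+α⁻+ρ⁺−ρ⁻)/γ < 0. -/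
/-!
Clearing denominators, the determinant identity is `-v` times the quadratic equation for `ρ⁺`,
and the trace identity is a plain rational-function identity. For the sign of the trace, the
quadratic equation rewrites `a + b + ρ⁺ - ρ⁻` as `b / ρ⁺ + ρ⁺`, and `v - γ = v ρ⁻`, so the
numerator of the trace is `v ρ⁻ + b / ρ⁺ + ρ⁺ > 0`.
-/

noncomputable def travelingWaveJacobian (v a b ρp : ℝ) : Matrix (Fin 2) (Fin 2) ℝ :=
  !![-((v - v * ρp + a - (1 - ρp)) / (v * ρp)),
      (1 - ρp) * (ρp + b + v * ρp) / (v * ρp * ρp);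
     ρp * (a - (1 - ρp)) / (v * ρp * (1 - ρp)), -((ρp + b) / (v * ρp))]

section

variable {v a b ρp : ℝ}

theorem det_travelingWaveJacobian (hv : v ≠ 0) (hρp : ρp ≠ 0) (hρm : 1 - ρp ≠ 0)
    (hroot : ρp ^ 2 + (a + b - 1) * ρp - b = 0) :
    (travelingWaveJacobian v a b ρp).det = v * ρp * (1 - ρp) / (v * ρp) ^ 2 := by
  rw [travelingWaveJacobian, Matrix.det_fin_two_of]
  field_simp
  linear_combination (-v) * hroot

theorem trace_travelingWaveJacobian (hv : v ≠ 0) (hρp : ρp ≠ 0) :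
    (travelingWaveJacobian v a b ρp).trace =
      -((v - v * ρp + a + b + ρp - (1 - ρp)) / (v * ρp)) := by
  rw [travelingWaveJacobian, Matrix.trace_fin_two_of]
  field_simp
  ring

theorem add_sub_eq_div_add_of_root (hρp : ρp ≠ 0) (hroot : ρp ^ 2 + (a + b - 1) * ρp - b = 0) :
    a + b + ρp - (1 - ρp) = b / ρp + ρp := by
  field_simp
  linear_combination hroot

theorem trace_travelingWaveJacobian_neg (hv : 0 < v) (hb : 0 < b) (hρp : ρp ∈ Set.Ioo (0 : ℝ) 1)
    (hroot : ρp ^ 2 + (a + b - 1) * ρp - b = 0) :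
    (travelingWaveJacobian v a b ρp).trace < 0 := by
  obtain ⟨h0, h1⟩ := hρp
  have hnum : v - v * ρp + a + b + ρp - (1 - ρp) = v * (1 - ρp) + b / ρp + ρp := by
    linear_combination add_sub_eq_div_add_of_root h0.ne' hroot
  have hρm : 0 < 1 - ρp := by linarith
  rw [trace_travelingWaveJacobian hv.ne' h0.ne', hnum, neg_neg_iff_pos]
  positivity

end

theorem stmt4_general (v a b ρp : ℝ) (hv : 0 < v) (hb : 0 < b)
    (hρp : ρp ∈ Set.Ioo (0:ℝ) 1) (hroot : ρp^2 + (a + b - 1) * ρp - b = 0) :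
    let ρm : ℝ := 1 - ρp
    let γ : ℝ := v * ρp
    let J : Matrix (Fin 2) (Fin 2) ℝ :=
      !![-((v - γ + a - ρm)/γ), ρm*(ρp + b + γ)/(γ*ρp);
         ρp*(a - ρm)/(γ*ρm), -((ρp + b)/γ)]
    J.det = v * ρp * ρm / γ^2 ∧ 0 < J.det ∧
    Matrix.trace J = -((v - γ + a + b + ρp - ρm)/γ) ∧ Matrix.trace J < 0 := by
  intro ρm γ J
  change (travelingWaveJacobian v a b ρp).det = _ ∧ 0 < (travelingWaveJacobian v a b ρp).det ∧
    (travelingWaveJacobian v a b ρp).trace = _ ∧ (travelingWaveJacobian v a b ρp).trace < 0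
  obtain ⟨h0, h1⟩ := hρp
  have hρm : 0 < 1 - ρp := by linarith
  have hdet := det_travelingWaveJacobian hv.ne' h0.ne' hρm.ne' hroot
  refine ⟨hdet, ?_, trace_travelingWaveJacobian hv.ne' h0.ne',
    trace_travelingWaveJacobian_neg hv hb ⟨h0, h1⟩ hroot⟩
  rw [hdet]
  positivity

theorem stmt4 (v a b ρp : ℝ) (hv : 0 < v) (ha : 0 < a) (hb : 0 < b)
    (hρp : ρp ∈ Set.Ioo (0:ℝ) 1) (hroot : ρp^2 + (a + b - 1) * ρp - b = 0) :
    let ρm : ℝ := 1 - ρp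
    let γ : ℝ := v * ρp
    let J : Matrix (Fin 2) (Fin 2) ℝ :=
      !![-((v - γ + a - ρm)/γ), ρm*(ρp + b + γ)/(γ*ρp);
         ρp*(a - ρm)/(γ*ρm), -((ρp + b)/γ)]
    J.det = v * ρp * ρm / γ^2 ∧ 0 < J.det ∧
    Matrix.trace J = -((v - γ + a + b + ρp - ρm)/γ) ∧ Matrix.trace J < 0 :=
  stmt4_general v a b ρp hv hb hρp hroot
end

section
/- Under the hypotheses of the preceding statement (v₊ > 0, α⁺, α⁻ > 0, ρ⁺ ∈ (0,1) the root of (ρ⁺)² + (α⁺+α⁻−1)ρ⁺ − α⁻ = 0, ρ⁻ = 1−ρ⁺, γ = v₊ρ⁺), the matrix J(0,0) has two distinct negative real eigenvalues; i.e. tr(J)² − 4 det(J) > 0, tr(J) < 0 and det(J) > 0. -/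
/-!
The root equation says exactly that `a - ρ⁻ = b ρ⁻ / ρ⁺`. Substituting this into `J` gives
`tr J = -(v ρ⁻ + ρ⁺ + b / ρ⁺) / γ` and `det J = (v ρ⁻) ρ⁺ / γ²`, and then
`tr² - 4 det = ((v ρ⁻ - ρ⁺)² + 2 (v ρ⁻ + ρ⁺) (b / ρ⁺) + (b / ρ⁺)²) / γ² > 0`.
-/

lemma four_mul_lt_sq_add_add {x y c : ℝ} (hx : 0 ≤ x) (hy : 0 ≤ y) (hc : 0 < c) :
    4 * (x * y) < (x + y + c) ^ 2 := by
  nlinarith [sq_nonneg (x - y), mul_nonneg (add_nonneg hx hy) hc.le]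

lemma Matrix.discr_pos_trace_neg_det_pos {J : Matrix (Fin 2) (Fin 2) ℝ} {x y c γ : ℝ}
    (hx : 0 < x) (hy : 0 < y) (hc : 0 < c) (hγ : 0 < γ)
    (htr : J.trace = -((x + y + c) / γ)) (hdet : J.det = x * y / γ ^ 2) :
    J.trace ^ 2 - 4 * J.det > 0 ∧ J.trace < 0 ∧ J.det > 0 := by
  refine ⟨?_, by rw [htr]; exact neg_neg_of_pos (by positivity), by rw [hdet]; positivity⟩
  have hdiscr : J.trace ^ 2 - 4 * J.det = ((x + y + c) ^ 2 - 4 * (x * y)) / γ ^ 2 := by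
    rw [htr, hdet]; field_simp
  rw [hdiscr]
  exact div_pos (sub_pos.mpr (four_mul_lt_sq_add_add hx.le hy.le hc)) (by positivity)

theorem stmt5_general (v a b ρp : ℝ) (hv : 0 < v) (hb : 0 < b)
    (hρp : ρp ∈ Set.Ioo (0:ℝ) 1) (hroot : ρp^2 + (a + b - 1) * ρp - b = 0) :
    let ρm : ℝ := 1 - ρp
    let γ : ℝ := v * ρp
    let J : Matrix (Fin 2) (Fin 2) ℝ :=
      !![-((v - γ + a - ρm)/γ), ρm*(ρp + b + γ)/(γ*ρp);
         ρp*(a - ρm)/(γ*ρm), -((ρp + b)/γ)]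
    (Matrix.trace J)^2 - 4 * J.det > 0 ∧ Matrix.trace J < 0 ∧ J.det > 0 := by
  intro ρm γ J
  obtain ⟨hρp0, hρp1⟩ := hρp
  have hρm : 0 < ρm := sub_pos.mpr hρp1
  have hγ : 0 < γ := mul_pos hv hρp0
  have hρm_ne : (1 : ℝ) - ρp ≠ 0 := hρm.ne'
  have htr : J.trace = -((v * ρm + ρp + b / ρp) / γ) := by
    rw [Matrix.trace_fin_two_of]
    simp only [γ, ρm]
    field_simp
    linear_combination -hroot
  have hdet : J.det = v * ρm * ρp / γ ^ 2 := by
    rw [Matrix.det_fin_two_of]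
    simp only [γ, ρm]
    field_simp
    linear_combination (-v) * hroot
  exact Matrix.discr_pos_trace_neg_det_pos (mul_pos hv hρm) hρp0 (div_pos hb hρp0) hγ htr hdet

theorem stmt5 (v a b ρp : ℝ) (hv : 0 < v) (ha : 0 < a) (hb : 0 < b)
    (hρp : ρp ∈ Set.Ioo (0:ℝ) 1) (hroot : ρp^2 + (a + b - 1) * ρp - b = 0) :
    let ρm : ℝ := 1 - ρp
    let γ : ℝ := v * ρp
    let J : Matrix (Fin 2) (Fin 2) ℝ :=
      !![-((v - γ + a - ρm)/γ), ρm*(ρp + b + γ)/(γ*ρp);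
         ρp*(a - ρm)/(γ*ρm), -((ρp + b)/γ)]
    (Matrix.trace J)^2 - 4 * J.det > 0 ∧ Matrix.trace J < 0 ∧ J.det > 0 :=
  stmt5_general v a b ρp hv hb hρp hroot
end

section
/- With v₊, α⁺, α⁻, ρ⁺, ρ⁻, γ as above, define γ²(tr²(J(0,0)) − 4 det(J(0,0))). Then this quantity equals (v₊ − γ + α⁺ − α⁻ − ρ⁺ − ρ⁻)² + 4(α⁺ − ρ⁻)(ρ⁺ + α⁻ + γ), and this is strictly positive. -/
theorem Matrix.trace_sq_sub_four_mul_det_fin_two {R : Type*} [CommRing R]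
    (A : Matrix (Fin 2) (Fin 2) R) :
    A.trace ^ 2 - 4 * A.det = (A 0 0 - A 1 1) ^ 2 + 4 * A 0 1 * A 1 0 := by
  rw [Matrix.trace_fin_two, Matrix.det_fin_two]
  ring

theorem one_sub_lt_of_sq_add_mul_sub_eq_zero {a b ρ : ℝ} (hb : 0 < b)
    (hρ : ρ ∈ Set.Ioo (0 : ℝ) 1) (hroot : ρ ^ 2 + (a + b - 1) * ρ - b = 0) :
    1 - ρ < a := by
  obtain ⟨h0, h1⟩ := hρ
  have hbalance : (a - (1 - ρ)) * ρ = b * (1 - ρ) := by linear_combination hroot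
  have : 0 < (a - (1 - ρ)) * ρ := hbalance ▸ mul_pos hb (sub_pos.2 h1)
  linarith [pos_of_mul_pos_left this h0.le]

theorem stmt6_general (v a b ρp : ℝ) (hv : 0 < v) (hb : 0 < b)
    (hρp : ρp ∈ Set.Ioo (0:ℝ) 1) (hroot : ρp^2 + (a + b - 1) * ρp - b = 0) :
    let ρm : ℝ := 1 - ρp
    let γ : ℝ := v * ρp
    let J : Matrix (Fin 2) (Fin 2) ℝ :=
      !![-((v - γ + a - ρm)/γ), ρm*(ρp + b + γ)/(γ*ρp);
         ρp*(a - ρm)/(γ*ρm), -((ρp + b)/γ)]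
    γ^2 * ((Matrix.trace J)^2 - 4 * J.det) =
      (v - γ + a - b - ρp - ρm)^2 + 4*(a - ρm)*(ρp + b + γ) ∧
    0 < (v - γ + a - b - ρp - ρm)^2 + 4*(a - ρm)*(ρp + b + γ) := by
  intro ρm γ J
  have hρp0 : 0 < ρp := hρp.1
  have hρm : 0 < ρm := sub_pos.2 hρp.2
  have hγ : 0 < γ := mul_pos hv hρp0
  have hgap : 0 < a - ρm := sub_pos.2 (one_sub_lt_of_sq_add_mul_sub_eq_zero hb hρp hroot)
  refine ⟨?_, ?_⟩
  · rw [Matrix.trace_sq_sub_four_mul_det_fin_two]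
    simp only [J, Matrix.of_apply, Matrix.cons_val', Matrix.cons_val_zero, Matrix.cons_val_one,
      Matrix.empty_val', Matrix.cons_val_fin_one]
    field_simp
    ring
  · have hsum : 0 < ρp + b + γ := by linarith
    nlinarith [sq_nonneg (v - γ + a - b - ρp - ρm), mul_pos hgap hsum]

theorem stmt6 (v a b ρp : ℝ) (hv : 0 < v) (ha : 0 < a) (hb : 0 < b)
    (hρp : ρp ∈ Set.Ioo (0:ℝ) 1) (hroot : ρp^2 + (a + b - 1) * ρp - b = 0) :
    let ρm : ℝ := 1 - ρp
    let γ : ℝ := v * ρp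
    let J : Matrix (Fin 2) (Fin 2) ℝ :=
      !![-((v - γ + a - ρm)/γ), ρm*(ρp + b + γ)/(γ*ρp);
         ρp*(a - ρm)/(γ*ρm), -((ρp + b)/γ)]
    γ^2 * ((Matrix.trace J)^2 - 4 * J.det) =
      (v - γ + a - b - ρp - ρm)^2 + 4*(a - ρm)*(ρp + b + γ) ∧
    0 < (v - γ + a - b - ρp - ρm)^2 + 4*(a - ρm)*(ρp + b + γ) :=
  stmt6_general v a b ρp hv hb hρp hroot
end

section
/- Let v₊ > 0, α⁺, α⁻ > 0, ρ⁺ ∈ (0,1) the root of (ρ⁺)² + (α⁺+α⁻−1)ρ⁺ − α⁻ = 0, ρ⁻ = 1−ρ⁺, γ = v₊ρ⁺. Then the matrix J(1,1) = [[−(v₊−γ+α⁺)/γ, ρ⁻(α⁻+γ)/(γρ⁺)], [ρ⁺α⁺/(γρ⁻), −α⁻/γ]] has negative determinant: det J(1,1) = (v₊/γ²)(α⁻ − ρ⁺(α⁺+α⁻)) < 0. Consequently J(1,1) has one positive and one negative real eigenvalue. -/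
/-!
Clearing denominators gives `det J = (v/γ²)(b - ρ⁺(a + b))`, and the quadratic relation for `ρ⁺`
turns the bracket into `ρ⁺(ρ⁺ - 1) < 0`. The characteristic polynomial `λ² - tr J · λ + det J` of
a real `2 × 2` matrix with negative determinant is negative at `0`, so it has a negative and a
positive root, and every root of the characteristic polynomial is an eigenvalue.
-/

open Matrix Polynomial

theorem Matrix.exists_mulVec_eq_smul_of_isRoot_charpoly {n R : Type*} [Fintype n]
    [DecidableEq n] [CommRing R] [IsDomain R] (M : Matrix n n R) {μ : R}
    (hμ : M.charpoly.IsRoot μ) : ∃ w ≠ 0, M *ᵥ w = μ • w := by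
  rw [IsRoot.def, eval_charpoly] at hμ
  obtain ⟨w, hw, hker⟩ := exists_mulVec_eq_zero_iff.mpr hμ
  refine ⟨w, hw, ?_⟩
  rw [sub_mulVec, scalar_apply, diagonal_const_mulVec, sub_eq_zero] at hker
  exact hker.symm

theorem exists_neg_pos_roots_of_neg_const {b c : ℝ} (hc : c < 0) :
    ∃ x y : ℝ, x < 0 ∧ 0 < y ∧ x ^ 2 + b * x + c = 0 ∧ y ^ 2 + b * y + c = 0 := by
  set R := √(b ^ 2 - 4 * c)
  have hR : R ^ 2 = b ^ 2 - 4 * c := Real.sq_sqrt (by nlinarith)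
  have hbR : |b| < R := by
    rw [← Real.sqrt_sq_eq_abs]
    exact Real.sqrt_lt_sqrt (sq_nonneg b) (by linarith)
  refine ⟨(-b - R) / 2, (-b + R) / 2, ?_, ?_, ?_, ?_⟩
  · linarith [neg_abs_le b]
  · linarith [le_abs_self b]
  · linear_combination hR / 4
  · linear_combination hR / 4

theorem Matrix.exists_neg_pos_eigenvalues_of_det_neg (M : Matrix (Fin 2) (Fin 2) ℝ)
    (hM : M.det < 0) :
    ∃ ls lu : ℝ, ls < 0 ∧ 0 < lu ∧ (∃ w ≠ 0, M *ᵥ w = ls • w) ∧ (∃ w ≠ 0, M *ᵥ w = lu • w) := by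
  obtain ⟨ls, lu, hls, hlu, hrs, hru⟩ := exists_neg_pos_roots_of_neg_const (b := -M.trace) hM
  have isRoot_charpoly {μ : ℝ} (h : μ ^ 2 + -M.trace * μ + M.det = 0) : M.charpoly.IsRoot μ := by
    simp only [IsRoot.def, charpoly_fin_two, eval_add, eval_sub, eval_mul, eval_pow, eval_X, eval_C]
    linear_combination h
  exact ⟨ls, lu, hls, hlu, M.exists_mulVec_eq_smul_of_isRoot_charpoly (isRoot_charpoly hrs),
    M.exists_mulVec_eq_smul_of_isRoot_charpoly (isRoot_charpoly hru)⟩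

theorem stmt7_general (v a b ρp : ℝ) (hv : 0 < v)
    (hρp : ρp ∈ Set.Ioo (0:ℝ) 1) (hroot : ρp^2 + (a + b - 1) * ρp - b = 0) :
    let ρm : ℝ := 1 - ρp
    let γ : ℝ := v * ρp
    let J : Matrix (Fin 2) (Fin 2) ℝ :=
      !![-((v - γ + a)/γ), ρm*(b + γ)/(γ*ρp);
         ρp*a/(γ*ρm), -(b/γ)]
    J.det = (v/γ^2) * (b - ρp*(a + b)) ∧ J.det < 0 ∧
    ∃ (ls lu : ℝ), ls < 0 ∧ 0 < lu ∧
      (∃ w : Fin 2 → ℝ, w ≠ 0 ∧ J.mulVec w = ls • w) ∧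
      (∃ w : Fin 2 → ℝ, w ≠ 0 ∧ J.mulVec w = lu • w) := by
  obtain ⟨hρp₀, hρp₁⟩ := hρp
  intro ρm γ J
  have hρm : ρm ≠ 0 := by simp only [ρm]; linarith
  have hγ : γ ≠ 0 := by positivity
  have hdet : J.det = (v/γ^2) * (b - ρp*(a + b)) := by
    simp only [J, det_fin_two_of, γ]
    field_simp
    ring
  have hdet_neg : J.det < 0 := by
    rw [hdet, show b - ρp * (a + b) = ρp * (ρp - 1) by linear_combination -hroot]
    exact mul_neg_of_pos_of_neg (by positivity) (mul_neg_of_pos_of_neg hρp₀ (by linarith))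
  exact ⟨hdet, hdet_neg, J.exists_neg_pos_eigenvalues_of_det_neg hdet_neg⟩

theorem stmt7 (v a b ρp : ℝ) (hv : 0 < v) (ha : 0 < a) (hb : 0 < b)
    (hρp : ρp ∈ Set.Ioo (0:ℝ) 1) (hroot : ρp^2 + (a + b - 1) * ρp - b = 0) :
    let ρm : ℝ := 1 - ρp
    let γ : ℝ := v * ρp
    let J : Matrix (Fin 2) (Fin 2) ℝ :=
      !![-((v - γ + a)/γ), ρm*(b + γ)/(γ*ρp);
         ρp*a/(γ*ρm), -(b/γ)]
    J.det = (v/γ^2) * (b - ρp*(a + b)) ∧ J.det < 0 ∧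
    ∃ (ls lu : ℝ), ls < 0 ∧ 0 < lu ∧
      (∃ w : Fin 2 → ℝ, w ≠ 0 ∧ J.mulVec w = ls • w) ∧
      (∃ w : Fin 2 → ℝ, w ≠ 0 ∧ J.mulVec w = lu • w) :=
  stmt7_general v a b ρp hv hρp hroot
end

section
/- Let v₊ > 0, α⁺, α⁻ > 0, ρ⁺ ∈ (0,1) the root of (ρ⁺)² + (α⁺+α⁻−1)ρ⁺ − α⁻ = 0, ρ⁻ = 1−ρ⁺, γ = v₊ρ⁺. Let λ_u be the positive eigenvalue of J(1,1) = [[−(v₊−γ+α⁺)/γ, ρ⁻(α⁻+γ)/(γρ⁺)], [ρ⁺α⁺/(γρ⁻), −α⁻/γ]], and let (x_u, y_u) be an eigenvector for λ_u with x_u > 0. Then (v₊−γ+α⁺)/(v₊−γ+α⁺−ρ⁻) < y_u/x_u < α⁺/(α⁺−ρ⁻). -/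
/-! With ρ⁻ = 1 - ρ⁺, γ = v₊ρ⁺ and A = v₊ - γ + α⁺, the root equation reads
ρ⁺(α⁺ - ρ⁻) = α⁻ρ⁻; in particular α⁺ > ρ⁻, hence A - ρ⁻ = v₊ρ⁻ + (α⁺ - ρ⁻) > 0.
Using it, the two rows of J (x, y) = λ (x, y) become `(A - ρ⁻) y - A x = λγ x` and
`ρ⁺ (α⁺ x - (α⁺ - ρ⁻) y) = λγρ⁻ y`. The second row gives `y ρ⁻ (α⁻ + λγ) = ρ⁺α⁺ x`, so
y > 0; then both right-hand sides are positive, and these are the two inequalities with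
denominators cleared. -/

theorem Matrix.mulVec_fin_two_eq_smul_iff {R : Type*} [Semiring R] {p q r s x y l : R} :
    (!![p, q; r, s]).mulVec ![x, y] = l • ![x, y] ↔ p * x + q * y = l * x ∧ r * x + s * y = l * y := by
  simp [Matrix.vecCons_inj]

namespace TravelingWave

variable {v a b ρ x y l : ℝ}

theorem mul_sub_one_sub_eq (hroot : ρ ^ 2 + (a + b - 1) * ρ - b = 0) :
    ρ * (a - (1 - ρ)) = b * (1 - ρ) := by
  linear_combination hroot

theorem eigen_first_row_eq (hv : 0 < v) (hρ : ρ ∈ Set.Ioo (0 : ℝ) 1)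
    (hroot : ρ ^ 2 + (a + b - 1) * ρ - b = 0)
    (h : -((v - v * ρ + a) / (v * ρ)) * x + (1 - ρ) * (b + v * ρ) / (v * ρ * ρ) * y = l * x) :
    (v - v * ρ + a - (1 - ρ)) * y - (v - v * ρ + a) * x = l * (v * ρ) * x := by
  have hρ0 : ρ ≠ 0 := hρ.1.ne'
  field_simp at h
  exact mul_left_cancel₀ hρ0 (by linear_combination h + y * mul_sub_one_sub_eq hroot)

theorem eigen_second_row_eq (hv : 0 < v) (hρ : ρ ∈ Set.Ioo (0 : ℝ) 1)
    (hroot : ρ ^ 2 + (a + b - 1) * ρ - b = 0)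
    (h : ρ * a / (v * ρ * (1 - ρ)) * x + -(b / (v * ρ)) * y = l * y) :
    ρ * (a * x - (a - (1 - ρ)) * y) = l * (v * ρ) * (1 - ρ) * y := by
  have hρ0 : ρ ≠ 0 := hρ.1.ne'
  have hρ1 : 1 - ρ ≠ 0 := (sub_pos.2 hρ.2).ne'
  field_simp at h
  linear_combination h - y * mul_sub_one_sub_eq hroot

end TravelingWave

open TravelingWave

theorem stmt9 (v a b ρp : ℝ) (hv : 0 < v) (ha : 0 < a) (hb : 0 < b)
    (hρp : ρp ∈ Set.Ioo (0:ℝ) 1) (hroot : ρp^2 + (a + b - 1) * ρp - b = 0) :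
    let ρm : ℝ := 1 - ρp
    let γ : ℝ := v * ρp
    let J : Matrix (Fin 2) (Fin 2) ℝ :=
      !![-((v - γ + a)/γ), ρm*(b + γ)/(γ*ρp);
         ρp*a/(γ*ρm), -(b/γ)]
    ∀ (lu xu yu : ℝ), 0 < lu → 0 < xu → J.mulVec ![xu, yu] = lu • ![xu, yu] →
      (v - γ + a) / (v - γ + a - ρm) < yu / xu ∧ yu / xu < a / (a - ρm) := by
  intro ρm γ J lu xu yu hlu hxu heq
  obtain ⟨hrow0, hrow1⟩ := Matrix.mulVec_fin_two_eq_smul_iff.1 heq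
  have h0 := eigen_first_row_eq hv hρp hroot hrow0
  have h1 := eigen_second_row_eq hv hρp hroot hrow1
  have hρm : 0 < ρm := sub_pos.2 hρp.2
  have hγ : 0 < γ := mul_pos hv hρp.1
  have hgap : 0 < a - ρm :=
    pos_of_mul_pos_right ((mul_sub_one_sub_eq hroot).symm ▸ mul_pos hb hρm) hρp.1.le
  have hA : 0 < v - γ + a - ρm := by linarith [mul_pos hv hρm]
  have hyu : 0 < yu := by
    have e : yu * (ρm * (b + lu * γ)) = ρp * a * xu := by
      linear_combination -h1 - yu * mul_sub_one_sub_eq hroot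
    exact pos_of_mul_pos_left (e ▸ mul_pos (mul_pos hρp.1 ha) hxu) (by positivity)
  constructor
  · rw [div_lt_div_iff₀ hA hxu]
    linarith [mul_pos (mul_pos hlu hγ) hxu]
  · rw [div_lt_div_iff₀ hxu hgap]
    have : 0 < ρp * (a * xu - (a - ρm) * yu) := by rw [h1]; positivity
    linarith [pos_of_mul_pos_right this hρp.1.le]
end

section
/- Let v₊ > 0, α⁺, α⁻ > 0, ρ⁺ ∈ (0,1) with (ρ⁺)² + (α⁺+α⁻−1)ρ⁺ − α⁻ = 0, ρ⁻ = 1−ρ⁺, γ = v₊ρ⁺. Consider the planar vector field F(x,y) = (−(ρ⁻/γ)xy − ((v₊−γ+α⁺−ρ⁻)/γ)x + (ρ⁻(ρ⁺+α⁻+γ)/(γρ⁺))y, (ρ⁺/γ)xy − ((ρ⁺+α⁻)/γ)y + (ρ⁺(α⁺−ρ⁻)/(γρ⁻))x). Then the only zeros of F in [0,1]² are (0,0) and (1,1). -/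
/-!
The root condition on `ρ⁺` says exactly that `ρ⁺ (α⁺ - ρ⁻) = α⁻ ρ⁻`. With `β = α⁻ / ρ⁺` the two
components of `F` then become `ρ⁻/γ` and `ρ⁺/γ` times the components of the reduced field
`(-xy - (v + β) x + (1 + β + v) y, xy - (1 + β) y + β x)`. The components of the reduced field
add up to `v (y - x)`, so its zeros lie on the diagonal, where the second component is `x² - x`.
-/

theorem reduced_field_eq_zero_iff {v β x y : ℝ} (hv : v ≠ 0) :
    (-x * y - (v + β) * x + (1 + β + v) * y = 0 ∧ x * y - (1 + β) * y + β * x = 0) ↔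
      (x = 0 ∧ y = 0) ∨ (x = 1 ∧ y = 1) := by
  constructor
  · rintro ⟨h₁, h₂⟩
    have hxy : y = x := by
      have : v * (y - x) = 0 := by linear_combination h₁ + h₂
      linarith [(mul_eq_zero.mp this).resolve_left hv]
    subst hxy
    have : y * (y - 1) = 0 := by linear_combination h₂
    rcases mul_eq_zero.mp this with h | h
    · exact .inl ⟨h, h⟩
    · exact .inr ⟨by linarith, by linarith⟩
  · rintro (⟨rfl, rfl⟩ | ⟨rfl, rfl⟩) <;> constructor <;> ring

theorem stmt10_general (v a b ρp : ℝ) (hv : 0 < v)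
    (hρp : ρp ∈ Set.Ioo (0:ℝ) 1) (hroot : ρp^2 + (a + b - 1) * ρp - b = 0) :
    let ρm : ℝ := 1 - ρp
    let γ : ℝ := v * ρp
    ∀ x y : ℝ, x ∈ Set.Icc (0:ℝ) 1 → y ∈ Set.Icc (0:ℝ) 1 →
      ((-(ρm/γ) * x * y - ((v - γ + a - ρm)/γ) * x + (ρm*(ρp + b + γ)/(γ*ρp)) * y = 0 ∧
        (ρp/γ) * x * y - ((ρp + b)/γ) * y + (ρp*(a - ρm)/(γ*ρm)) * x = 0)
        ↔ ((x, y) = ((0:ℝ), (0:ℝ)) ∨ (x, y) = ((1:ℝ), (1:ℝ)))) := by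
  intro ρm γ x y _ _
  have hρp₀ : ρp ≠ 0 := hρp.1.ne'
  have hρm : ρm ≠ 0 := by simp only [ρm]; linarith [hρp.2]
  have hγ : γ ≠ 0 := by simp only [γ]; positivity
  set β := b / ρp
  have hβ : a - ρm = ρm * β := by
    simp only [ρm, β]; field_simp; linear_combination hroot
  have hF₁ : -(ρm/γ) * x * y - ((v - γ + a - ρm)/γ) * x + (ρm*(ρp + b + γ)/(γ*ρp)) * y
      = ρm / γ * (-x * y - (v + β) * x + (1 + β + v) * y) := by
    have hcoef : v - γ + a - ρm = ρm * (v + β) := by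
      simp only [γ, ρm] at hβ ⊢; linear_combination hβ
    rw [hcoef]; simp only [ρm, γ, β]; field_simp
  have hF₂ : (ρp/γ) * x * y - ((ρp + b)/γ) * y + (ρp*(a - ρm)/(γ*ρm)) * x
      = ρp / γ * (x * y - (1 + β) * y + β * x) := by
    rw [hβ]; simp only [β]; field_simp
  rw [hF₁, hF₂, mul_eq_zero, mul_eq_zero, or_iff_right (div_ne_zero hρm hγ),
    or_iff_right (div_ne_zero hρp₀ hγ), reduced_field_eq_zero_iff hv.ne', Prod.mk.injEq,
    Prod.mk.injEq]

theorem stmt10 (v a b ρp : ℝ) (hv : 0 < v) (ha : 0 < a) (hb : 0 < b)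
    (hρp : ρp ∈ Set.Ioo (0:ℝ) 1) (hroot : ρp^2 + (a + b - 1) * ρp - b = 0) :
    let ρm : ℝ := 1 - ρp
    let γ : ℝ := v * ρp
    ∀ x y : ℝ, x ∈ Set.Icc (0:ℝ) 1 → y ∈ Set.Icc (0:ℝ) 1 →
      ((-(ρm/γ) * x * y - ((v - γ + a - ρm)/γ) * x + (ρm*(ρp + b + γ)/(γ*ρp)) * y = 0 ∧
        (ρp/γ) * x * y - ((ρp + b)/γ) * y + (ρp*(a - ρm)/(γ*ρm)) * x = 0)
        ↔ ((x, y) = ((0:ℝ), (0:ℝ)) ∨ (x, y) = ((1:ℝ), (1:ℝ)))) :=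
  stmt10_general v a b ρp hv hρp hroot
end
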